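/- arXiv:1810.03827 — 3 statements merged into one kernel-verified Lean document; each statement's English description precedes it below -/
import Mathlib

section
/- Let q ≥ 2 and set N = q² − 1. Suppose a, b ∈ ℤ/Nℤ satisfy the multiset equality {−q·a, −q·b} = {a, b}. Then either b = −q·a in ℤ/Nℤ, or both a and b are divisible by q − 1 (i.e., a, b lie in the subgroup (q−1)·(ℤ/Nℤ)). -/
/-! Matching `{-q a, -q b}` with `{a, b}` crosswise gives `b = -q a`. Otherwise `a = -q a` and
`b = -q b`, i.e. `q + 1` kills `a` and `b` in `ℤ/(q - 1)(q + 1)`, and the `(q + 1)`-torsion of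
`ℤ/(q - 1)(q + 1)` is `(q - 1)·ℤ/(q - 1)(q + 1)`. -/

theorem Multiset.pair_eq_pair_iff {α : Type*} {x y a b : α} :
    ({x, y} : Multiset α) = {a, b} ↔ x = a ∧ y = b ∨ x = b ∧ y = a := by
  constructor
  · rw [insert_eq_cons, insert_eq_cons, cons_eq_cons]
    rintro (⟨rfl, h⟩ | ⟨-, cs, hy, hb⟩)
    · exact .inl ⟨rfl, singleton_inj.mp h⟩
    · obtain ⟨rfl, rfl⟩ := (singleton_eq_cons_iff _).mp hb
      exact .inr ⟨rfl, ((singleton_eq_cons_iff _).mp hy).1⟩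
  · rintro (⟨rfl, rfl⟩ | ⟨rfl, rfl⟩)
    · rfl
    · exact pair_comm _ _

theorem ZMod.exists_eq_mul_of_mul_eq_zero {N n m : ℕ} (hN : N = n * m) (hm : m ≠ 0)
    {x : ZMod N} (hx : (m : ZMod N) * x = 0) : ∃ c : ZMod N, x = n * c := by
  subst hN
  have hdvd : ((n * m : ℕ) : ℤ) ∣ m * (x.cast : ℤ) := by
    rw [← ZMod.intCast_zmod_eq_zero_iff_dvd]
    push_cast [ZMod.intCast_zmod_cast]
    exact hx
  rw [Nat.cast_mul, mul_comm (n : ℤ)] at hdvd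
  obtain ⟨k, hk⟩ := (mul_dvd_mul_iff_left (by exact_mod_cast hm)).mp hdvd
  refine ⟨k, ?_⟩
  rw [← ZMod.intCast_zmod_cast x, hk]
  push_cast
  rfl

theorem exists_eq_sub_one_mul_of_neg_mul_eq_self {q : ℕ} (hq : 1 ≤ q) {x : ZMod (q ^ 2 - 1)}
    (hx : -((q : ZMod (q ^ 2 - 1)) * x) = x) :
    ∃ c : ZMod (q ^ 2 - 1), x = ((q : ZMod (q ^ 2 - 1)) - 1) * c := by
  have hN : q ^ 2 - 1 = (q - 1) * (q + 1) := by
    rw [mul_comm, ← Nat.sq_sub_sq, one_pow]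
  have hx' : ((q + 1 : ℕ) : ZMod (q ^ 2 - 1)) * x = 0 := by
    push_cast
    linear_combination -hx
  obtain ⟨c, hc⟩ := ZMod.exists_eq_mul_of_mul_eq_zero hN q.succ_ne_zero hx'
  exact ⟨c, by rwa [Nat.cast_sub hq, Nat.cast_one] at hc⟩

/-- For `q ≥ 2` and `N = q² − 1`, if `a, b ∈ ℤ/Nℤ` satisfy the
multiset equality `{−q·a, −q·b} = {a, b}`, then either `b = −q·a`, or both `a`
and `b` are multiples of `q − 1` in `ℤ/Nℤ`. -/
theorem stmt1 (q : ℕ) (hq : 2 ≤ q) (a b : ZMod (q ^ 2 - 1))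
    (h : ({-((q : ZMod (q ^ 2 - 1)) * a), -((q : ZMod (q ^ 2 - 1)) * b)} :
        Multiset (ZMod (q ^ 2 - 1))) = {a, b}) :
    b = -((q : ZMod (q ^ 2 - 1)) * a) ∨
      ((∃ c : ZMod (q ^ 2 - 1), a = ((q : ZMod (q ^ 2 - 1)) - 1) * c) ∧
       (∃ c : ZMod (q ^ 2 - 1), b = ((q : ZMod (q ^ 2 - 1)) - 1) * c)) := by
  rcases Multiset.pair_eq_pair_iff.mp h with ⟨ha, hb⟩ | ⟨ha, -⟩
  · exact .inr ⟨exists_eq_sub_one_mul_of_neg_mul_eq_self (by omega) ha,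
      exists_eq_sub_one_mul_of_neg_mul_eq_self (by omega) hb⟩
  · exact .inl ha.symm
end

section
/- Let R be a commutative ring and Φ = [[0,1],[−1,0]] ∈ GL₂(R). Let C = ℤ/2 = {1, τ}. Define two actions of C on the group G = GL₂(R) × R^×: in the first, τ·(h,a) = (a·Φ h^{-⊤} Φ^{-1}, a); in the second, τ·(h,a) = (a·h^{-⊤}, a). Then the map sending (h,a)⋊1 ↦ (a^{-1}h, a^{-1})⋊1 and (h,a)⋊τ ↦ (a^{-1} h Φ, −a^{-1})⋊τ is a group isomorphism from the first semidirect product (GL₂(R) × R^×) ⋊ C onto the second. -/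
/-!
The isomorphism is `n ⋊ c ↦ ψ n · s c`, where `ψ (h, a) = (a⁻¹ h, a⁻¹)` is an automorphism of
`GL₂(R) × Rˣ` and `s` is the splitting `τ ↦ (Φ, -1) ⋊ τ` of the second semidirect product.
The splitting is a homomorphism because `Φᵀ = -Φ` gives `(Φ, -1) · τ(Φ, -1) = 1`, and the
assignment respects the actions because `(a⁻¹ h)⁻ᵀ = a h⁻ᵀ`, so that `ψ` intertwines the first
action of `τ` with the second one followed by conjugation by `(Φ, -1)`. A homomorphism of
semidirect products that is `ψ` on the normal subgroup and the identity on the quotient is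
bijective.
-/

open Matrix

section InvScale
variable {G A : Type*} [Group G] [CommGroup A]

def invScaleEquiv (ι : A →* G) (hι : ∀ a g, ι a * g = g * ι a) : G × A ≃* G × A where
  toFun x := (ι x.2⁻¹ * x.1, x.2⁻¹)
  invFun x := (ι x.2⁻¹ * x.1, x.2⁻¹)
  left_inv x := by simp [← mul_assoc]
  right_inv x := by simp [← mul_assoc]
  map_mul' x y := by
    simp only [Prod.fst_mul, Prod.snd_mul, mul_inv, map_mul, Prod.mk_mul_mk, mul_assoc,
      hι (y.2⁻¹)]

@[simp]
lemma invScaleEquiv_apply (ι : A →* G) (hι : ∀ a g, ι a * g = g * ι a) (x : G × A) :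
    invScaleEquiv ι hι x = (ι x.2⁻¹ * x.1, x.2⁻¹) := rfl

end InvScale

namespace SemidirectProduct
variable {N N' G : Type*} [Group N] [Group N'] [Group G] {φ : G →* MulAut N}
  {φ' : G →* MulAut N'}

theorem bijective_of_inl_of_right (f : N ⋊[φ] G →* N' ⋊[φ'] G) (ψ : N ≃* N')
    (hinl : ∀ n, f (inl n) = inl (ψ n)) (hright : ∀ x, (f x).right = x.right) :
    Function.Bijective f := by
  refine ⟨(injective_iff_map_eq_one f).2 fun x hx => ?_, fun y => ?_⟩
  · have hx_right : x.right = 1 := by rw [← hright, hx, one_right]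
    have hx_inl : inl x.left = x := SemidirectProduct.ext rfl (by simp [hx_right])
    rw [← hx_inl, hinl, ← map_one inl, inl_injective.eq_iff, map_eq_one_iff ψ ψ.injective] at hx
    rw [← hx_inl, hx, map_one]
  · set x₀ : N ⋊[φ] G := inr y.right
    have hy_inl : inl (y * (f x₀)⁻¹).left = y * (f x₀)⁻¹ :=
      SemidirectProduct.ext rfl (by simp [x₀, hright])
    refine ⟨inl (ψ.symm (y * (f x₀)⁻¹).left) * x₀, ?_⟩
    rw [map_mul, hinl, MulEquiv.apply_symm_apply, hy_inl, inv_mul_cancel_right]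

theorem inl_mul_inr_mul_self {g : G} (hg : g * g = 1) (t : N') :
    (inl t * inr g : N' ⋊[φ'] G) * (inl t * inr g) = inl (t * φ' g t) := by
  ext <;> simp [hg]

theorem inl_mul_inr_conj_inl (t : N') (g : G) (m : N') :
    (inl t * inr g : N' ⋊[φ'] G) * inl m * (inl t * inr g)⁻¹ = inl (t * φ' g m * t⁻¹) := by
  simp [inl_aut, mul_assoc]

noncomputable def mulEquivOfSection (ψ : N ≃* N') (s : G →* N' ⋊[φ'] G)
    (hs : ∀ g, (s g).right = g) (hconj : ∀ g n, inl (ψ (φ g n)) = s g * inl (ψ n) * (s g)⁻¹) :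
    N ⋊[φ] G ≃* N' ⋊[φ'] G :=
  MulEquiv.ofBijective
    (lift (inl.comp ψ.toMonoidHom) s fun g => by ext n <;> simp [hconj])
    (bijective_of_inl_of_right _ ψ (by simp) (by simp [lift, hs]))

theorem mulEquivOfSection_apply (ψ : N ≃* N') (s : G →* N' ⋊[φ'] G)
    (hs : ∀ g, (s g).right = g) (hconj : ∀ g n, inl (ψ (φ g n)) = s g * inl (ψ n) * (s g)⁻¹)
    (x : N ⋊[φ] G) : mulEquivOfSection ψ s hs hconj x = inl (ψ x.left) * s x.right := rfl

end SemidirectProduct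

section ZModTwo
variable {H : Type*} [Group H]

theorem eq_one_or_eq_ofAdd_one (c : Multiplicative (ZMod 2)) : c = 1 ∨ c = .ofAdd 1 := by
  revert c; decide

theorem mem_zpowers_ofAdd_one (c : Multiplicative (ZMod 2)) :
    c ∈ Subgroup.zpowers (Multiplicative.ofAdd 1) := by
  rcases eq_one_or_eq_ofAdd_one c with rfl | rfl
  exacts [one_mem _, Subgroup.mem_zpowers _]

theorem orderOf_dvd_orderOf_ofAdd_one {x : H} (hx : x * x = 1) :
    orderOf x ∣ orderOf (Multiplicative.ofAdd (1 : ZMod 2)) := by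
  rw [orderOf_ofAdd_eq_addOrderOf, ZMod.addOrderOf_one]
  exact orderOf_dvd_of_pow_eq_one (by rw [sq, hx])

noncomputable def zmodTwoHom (x : H) (hx : x * x = 1) : Multiplicative (ZMod 2) →* H :=
  monoidHomOfForallMemZpowers mem_zpowers_ofAdd_one (orderOf_dvd_orderOf_ofAdd_one hx)

@[simp]
theorem zmodTwoHom_ofAdd_one (x : H) (hx : x * x = 1) :
    zmodTwoHom x hx (Multiplicative.ofAdd 1) = x :=
  monoidHomOfForallMemZpowers_apply_gen _ _

end ZModTwo

section TwistedTransposeInv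
variable {n R : Type*} [Fintype n] [DecidableEq n] [CommRing R]

theorem Matrix.GeneralLinearGroup.coe_scalar_mul (u : Rˣ) (A : GL n R) :
    ((scalar n u * A : GL n R) : Matrix n n R) = (u : R) • (A : Matrix n n R) := by
  simp [smul_eq_diagonal_mul]

variable (n R) in
abbrev Matrix.GeneralLinearGroup.invScaleEquiv : GL n R × Rˣ ≃* GL n R × Rˣ :=
  _root_.invScaleEquiv (scalar n) scalar_commute

/-- The second action of the theorem is the case `Φ = 1`. -/
def IsTwistedTransposeInv (Φ : GL n R) (θ : GL n R × Rˣ → GL n R × Rˣ) : Prop :=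
  ∀ (h : GL n R) (a : Rˣ), ((θ (h, a)).1 : Matrix n n R) =
    (a : R) • ((Φ : Matrix n n R) * (↑h⁻¹ : Matrix n n R)ᵀ * (↑Φ⁻¹ : Matrix n n R)) ∧
      (θ (h, a)).2 = a

theorem invScaleEquiv_twistedTransposeInv {Φ : GL n R} {θ₁ θ₂ : GL n R × Rˣ → GL n R × Rˣ}
    (hθ₁ : IsTwistedTransposeInv Φ θ₁) (hθ₂ : IsTwistedTransposeInv 1 θ₂) (x : GL n R × Rˣ) :
    GeneralLinearGroup.invScaleEquiv n R (θ₁ x) =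
      (Φ, -1) * θ₂ (GeneralLinearGroup.invScaleEquiv n R x) * (Φ, -1)⁻¹ := by
  obtain ⟨h, a⟩ := x
  refine Prod.ext (Units.ext ?_) ?_
  · have hinv : ((GeneralLinearGroup.scalar n a⁻¹ * h)⁻¹ : GL n R) =
        GeneralLinearGroup.scalar n a * h⁻¹ := by
      rw [_root_.mul_inv_rev, ← map_inv, inv_inv, GeneralLinearGroup.scalar_commute]
    simp only [invScaleEquiv_apply, Prod.fst_mul, Prod.fst_inv, (hθ₁ _ _).2]
    rw [GeneralLinearGroup.coe_scalar_mul, Units.val_mul, Units.val_mul, (hθ₁ _ _).1,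
      (hθ₂ _ _).1, hinv, GeneralLinearGroup.coe_scalar_mul]
    simp only [Units.val_one, inv_one, Matrix.one_mul, Matrix.mul_one, transpose_smul, smul_smul,
      Matrix.mul_smul, Matrix.smul_mul]
  · simp [(hθ₁ _ _).2, (hθ₂ _ _).2]

theorem mul_twistedTransposeInv_self {Φ : GL n R} (hΦ : (Φ : Matrix n n R)ᵀ = -Φ)
    {θ : GL n R × Rˣ → GL n R × Rˣ} (hθ : IsTwistedTransposeInv 1 θ) :
    (Φ, -1) * θ (Φ, -1) = 1 := by
  refine Prod.ext (Units.ext ?_) ?_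
  · have hΦ_inv : (Φ : Matrix n n R)ᵀ * (↑Φ⁻¹ : Matrix n n R)ᵀ = 1 := by
      rw [← transpose_mul, ← Units.val_mul, inv_mul_cancel, Units.val_one, transpose_one]
    rw [hΦ, neg_mul] at hΦ_inv
    simpa [(hθ _ _).1] using hΦ_inv
  · simp [(hθ _ _).2]

end TwistedTransposeInv

section UnitaryCGroup
variable {n R : Type*} [Fintype n] [DecidableEq n] [CommRing R] (Φ : GL n R)
  (hΦ : (Φ : Matrix n n R)ᵀ = -Φ) (φ₁ φ₂ : Multiplicative (ZMod 2) →* MulAut (GL n R × Rˣ))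
  (hφ₁ : IsTwistedTransposeInv Φ (φ₁ (.ofAdd 1))) (hφ₂ : IsTwistedTransposeInv 1 (φ₂ (.ofAdd 1)))

open SemidirectProduct

noncomputable def skewSection :
    Multiplicative (ZMod 2) →* (GL n R × Rˣ) ⋊[φ₂] Multiplicative (ZMod 2) :=
  zmodTwoHom (inl (Φ, -1) * inr (.ofAdd 1)) <| by
    rw [inl_mul_inr_mul_self (by decide), mul_twistedTransposeInv_self hΦ hφ₂, map_one]

@[simp]
theorem skewSection_ofAdd_one :
    skewSection Φ hΦ φ₂ hφ₂ (.ofAdd 1) = inl (Φ, -1) * inr (.ofAdd 1) :=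
  zmodTwoHom_ofAdd_one _ _

noncomputable def twistedTransposeInvEquiv :
    (GL n R × Rˣ) ⋊[φ₁] Multiplicative (ZMod 2) ≃* (GL n R × Rˣ) ⋊[φ₂] Multiplicative (ZMod 2) :=
  mulEquivOfSection (GeneralLinearGroup.invScaleEquiv n R) (skewSection Φ hΦ φ₂ hφ₂)
    (fun c => by rcases eq_one_or_eq_ofAdd_one c with rfl | rfl <;> simp)
    (fun c m => by
      rcases eq_one_or_eq_ofAdd_one c with rfl | rfl
      · simp
      · rw [skewSection_ofAdd_one, inl_mul_inr_conj_inl,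
          invScaleEquiv_twistedTransposeInv hφ₁ hφ₂])

theorem twistedTransposeInvEquiv_mk_one (x : GL n R × Rˣ) :
    twistedTransposeInvEquiv Φ hΦ φ₁ φ₂ hφ₁ hφ₂ ⟨x, 1⟩ =
      ⟨GeneralLinearGroup.invScaleEquiv n R x, 1⟩ := by
  ext <;> simp [twistedTransposeInvEquiv, mulEquivOfSection_apply]

theorem twistedTransposeInvEquiv_mk_ofAdd_one (x : GL n R × Rˣ) :
    twistedTransposeInvEquiv Φ hΦ φ₁ φ₂ hφ₁ hφ₂ ⟨x, .ofAdd 1⟩ =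
      ⟨GeneralLinearGroup.invScaleEquiv n R x * (Φ, -1),
        .ofAdd 1⟩ := by
  ext <;> simp [twistedTransposeInvEquiv, mulEquivOfSection_apply]

end UnitaryCGroup

/-- Let `R` be a commutative ring, `Φ = [[0,1],[−1,0]]`, and
`C = ℤ/2 = {1, τ}`.  Consider the two actions of `C` on `G = GL₂(R) × Rˣ` where
`τ·(h,a) = (a·Φ h^{-⊤} Φ^{-1}, a)` (first) and `τ·(h,a) = (a·h^{-⊤}, a)`
(second).  The map `(h,a)⋊1 ↦ (a⁻¹h, a⁻¹)⋊1`, `(h,a)⋊τ ↦ (a⁻¹ h Φ, −a⁻¹)⋊τ`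
is a group isomorphism from the first semidirect product onto the second. -/
theorem stmt3 (R : Type*) [CommRing R]
    (Φ Φinv : Matrix (Fin 2) (Fin 2) R)
    (hΦ : Φ = !![0, 1; -1, 0]) (hΦinv : Φinv = !![0, -1; 1, 0])
    (τ : Multiplicative (ZMod 2)) (hτ : τ = Multiplicative.ofAdd 1)
    (φ₁ φ₂ : Multiplicative (ZMod 2) →* MulAut (GL (Fin 2) R × Rˣ))
    -- first action: τ·(h,a) = (a·Φ h^{-⊤} Φ⁻¹, a)
    (hφ₁ : ∀ (h : GL (Fin 2) R) (a : Rˣ),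
      (((φ₁ τ) (h, a)).1 : Matrix (Fin 2) (Fin 2) R) =
          (a : R) • (Φ * ((h⁻¹ : GL (Fin 2) R) : Matrix (Fin 2) (Fin 2) R)ᵀ * Φinv) ∧
        ((φ₁ τ) (h, a)).2 = a)
    -- second action: τ·(h,a) = (a·h^{-⊤}, a)
    (hφ₂ : ∀ (h : GL (Fin 2) R) (a : Rˣ),
      (((φ₂ τ) (h, a)).1 : Matrix (Fin 2) (Fin 2) R) =
          (a : R) • ((h⁻¹ : GL (Fin 2) R) : Matrix (Fin 2) (Fin 2) R)ᵀ ∧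
        ((φ₂ τ) (h, a)).2 = a) :
    ∃ e : ((GL (Fin 2) R × Rˣ) ⋊[φ₁] Multiplicative (ZMod 2)) ≃*
          ((GL (Fin 2) R × Rˣ) ⋊[φ₂] Multiplicative (ZMod 2)),
      ∀ (h : GL (Fin 2) R) (a : Rˣ),
        (((e ⟨(h, a), 1⟩).left.1 : Matrix (Fin 2) (Fin 2) R) =
            ((a⁻¹ : Rˣ) : R) • (h : Matrix (Fin 2) (Fin 2) R) ∧
          (e ⟨(h, a), 1⟩).left.2 = a⁻¹ ∧
          (e ⟨(h, a), 1⟩).right = 1) ∧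
        (((e ⟨(h, a), τ⟩).left.1 : Matrix (Fin 2) (Fin 2) R) =
            ((a⁻¹ : Rˣ) : R) • ((h : Matrix (Fin 2) (Fin 2) R) * Φ) ∧
          (e ⟨(h, a), τ⟩).left.2 = -a⁻¹ ∧
          (e ⟨(h, a), τ⟩).right = τ) := by
  let ΦU : GL (Fin 2) R := ⟨Φ, Φinv, by subst hΦ hΦinv; simp [Matrix.one_fin_two],
    by subst hΦ hΦinv; simp [Matrix.one_fin_two]⟩
  have hskew : (ΦU : Matrix (Fin 2) (Fin 2) R)ᵀ = -ΦU := by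
    subst hΦ; ext i j; fin_cases i <;> fin_cases j <;> simp [ΦU]
  have hφ₁' : IsTwistedTransposeInv ΦU (φ₁ τ) := hφ₁
  have hφ₂' : IsTwistedTransposeInv 1 (φ₂ τ) := fun h a => by simpa using hφ₂ h a
  subst hτ
  refine ⟨twistedTransposeInvEquiv ΦU hskew φ₁ φ₂ hφ₁' hφ₂', fun h a => ?_⟩
  rw [twistedTransposeInvEquiv_mk_one, twistedTransposeInvEquiv_mk_ofAdd_one]
  refine ⟨⟨GeneralLinearGroup.coe_scalar_mul _ _, rfl, rfl⟩, ?_, mul_neg_one _, rfl⟩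
  exact (congrArg _ (mul_assoc _ h ΦU)).trans (GeneralLinearGroup.coe_scalar_mul _ _)
end

section
/- Let Γ be a group, Δ ≤ Γ a subgroup of index 2, and fix γ₀ ∈ Γ ∖ Δ. Let G be a group equipped with an automorphism θ satisfying θ∘θ = id, and form the semidirect product G ⋊ ℤ/2 where the nontrivial element acts by θ. Then the assignment r ↦ (ρ, A), where ρ : Δ → G is determined by r(δ) = (ρ(δ), 0) and A ∈ G by r(γ₀) = (A, 1), is a bijection between: (a) group homomorphisms r : Γ → G ⋊ ℤ/2 whose composition with the projection to ℤ/2 is the quotient map Γ → Γ/Δ ≅ ℤ/2; and (b) pairs (ρ, A) consisting of a homomorphism ρ : Δ → G and an element A ∈ G satisfying ρ(γ₀ δ γ₀^{-1}) = A·θ(ρ(δ))·A^{-1} for all δ ∈ Δ, and ρ(γ₀²) = A·θ(A). -/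
/-!
A homomorphism out of `Γ` is determined by its restriction `ψ` to the index-two subgroup `Δ` and
its value `s` at `γ₀ ∉ Δ`, since `Γ ∖ Δ = Δ γ₀`. Conversely `δ ↦ ψ δ`, `δ γ₀ ↦ ψ δ * s` is a
homomorphism as soon as conjugation by `s` matches conjugation by `γ₀` on `Δ` and
`ψ (γ₀ ^ 2) = s ^ 2`. In `G ⋊ ℤ/2` the homomorphisms compatible with the projection are those with
`ψ δ = (ρ δ, 0)` and `s = (A, 1)`, and for these the two conditions read
`ρ (γ₀ δ γ₀⁻¹) = A θ(ρ δ) A⁻¹` and `ρ (γ₀ ^ 2) = A θ(A)`.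
-/

theorem Subgroup.mul_inv_mem_of_index_eq_two {Γ : Type*} [Group Γ] {Δ : Subgroup Γ} {γ₀ γ : Γ}
    (hΔ : Δ.index = 2) (hγ₀ : γ₀ ∉ Δ) (hγ : γ ∉ Δ) : γ * γ₀⁻¹ ∈ Δ :=
  (mul_mem_iff_of_index_two hΔ).2 (iff_of_false hγ (by rwa [inv_mem_iff]))

theorem ZMod.ofAdd_one_sq : Multiplicative.ofAdd (1 : ZMod 2) ^ 2 = 1 := by
  decide

namespace MonoidHom

variable {Γ : Type*} [Group Γ] {Δ : Subgroup Γ} {γ₀ : Γ}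

theorem ext_of_index_eq_two {M : Type*} [Monoid M] (hΔ : Δ.index = 2) (hγ₀ : γ₀ ∉ Δ)
    {f g : Γ →* M} (hΔfg : ∀ δ ∈ Δ, f δ = g δ) (hγ₀fg : f γ₀ = g γ₀) : f = g := by
  ext γ
  by_cases hγ : γ ∈ Δ
  · exact hΔfg γ hγ
  · rw [← inv_mul_cancel_right γ γ₀, map_mul f, map_mul g, hγ₀fg,
      hΔfg _ (Subgroup.mul_inv_mem_of_index_eq_two hΔ hγ₀ hγ)]

theorem eq_one_iff_mem_iff_of_index_eq_two (hΔ : Δ.index = 2) (hγ₀ : γ₀ ∉ Δ)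
    (χ : Γ →* Multiplicative (ZMod 2)) :
    (∀ γ, χ γ = 1 ↔ γ ∈ Δ) ↔ (∀ δ ∈ Δ, χ δ = 1) ∧ χ γ₀ = .ofAdd 1 := by
  have ne_one_iff : ∀ x : Multiplicative (ZMod 2), x ≠ 1 ↔ x = .ofAdd 1 := by decide
  refine ⟨fun h ↦ ⟨fun δ hδ ↦ (h δ).2 hδ, (ne_one_iff _).1 (mt (h γ₀).1 hγ₀)⟩, ?_⟩
  rintro ⟨hΔχ, hγ₀χ⟩ γ
  refine ⟨fun hγ ↦ ?_, hΔχ γ⟩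
  by_contra hγΔ
  rw [← inv_mul_cancel_right γ γ₀, map_mul, hγ₀χ,
    hΔχ _ (Subgroup.mul_inv_mem_of_index_eq_two hΔ hγ₀ hγΔ), one_mul] at hγ
  exact absurd hγ (by decide)

section Extend

variable {M : Type*} [Group M]

theorem map_mk_eq_mul (ψ : Δ →* M) {a b c : Γ} (ha : a ∈ Δ) (hb : b ∈ Δ) (hc : c ∈ Δ)
    (h : c = a * b) : ψ ⟨c, hc⟩ = ψ ⟨a, ha⟩ * ψ ⟨b, hb⟩ := by
  subst h
  exact map_mul ψ ⟨a, ha⟩ ⟨b, hb⟩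

variable (hΔ : Δ.index = 2) (hγ₀ : γ₀ ∉ Δ) (ψ : Δ →* M) (s : M)

open scoped Classical in
noncomputable def extendOfIndexTwoFun (γ : Γ) : M :=
  if h : γ ∈ Δ then ψ ⟨γ, h⟩
  else ψ ⟨γ * γ₀⁻¹, Subgroup.mul_inv_mem_of_index_eq_two hΔ hγ₀ h⟩ * s

variable {ψ s}

theorem extendOfIndexTwoFun_mul
    (hconj : ∀ δ : Δ, ψ ⟨γ₀ * δ * γ₀⁻¹, (Subgroup.normal_of_index_eq_two hΔ).conj_mem _ δ.2 γ₀⟩ =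
      s * ψ δ * s⁻¹)
    (hsq : ψ ⟨γ₀ ^ 2, Subgroup.sq_mem_of_index_two hΔ γ₀⟩ = s ^ 2) (x y : Γ) :
    extendOfIndexTwoFun hΔ hγ₀ ψ s (x * y) =
      extendOfIndexTwoFun hΔ hγ₀ ψ s x * extendOfIndexTwoFun hΔ hγ₀ ψ s y := by
  have hmul := Subgroup.mul_mem_iff_of_index_two hΔ (a := x) (b := y)
  have hconj_mem := (Subgroup.normal_of_index_eq_two hΔ).conj_mem
  have hmem {γ} := Subgroup.mul_inv_mem_of_index_eq_two hΔ hγ₀ (γ := γ)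
  by_cases hx : x ∈ Δ <;> by_cases hy : y ∈ Δ
  · have hxy : x * y ∈ Δ := hmul.2 (iff_of_true hx hy)
    simp only [extendOfIndexTwoFun, dif_pos hx, dif_pos hy, dif_pos hxy]
    exact ψ.map_mk_eq_mul hx hy hxy rfl
  · have hxy : x * y ∉ Δ := fun h ↦ hy ((hmul.1 h).1 hx)
    simp only [extendOfIndexTwoFun, dif_pos hx, dif_neg hy, dif_neg hxy]
    rw [ψ.map_mk_eq_mul hx (hmem hy) (hmem hxy) (mul_assoc _ _ _), mul_assoc]
  · have hxy : x * y ∉ Δ := fun h ↦ hx ((hmul.1 h).2 hy)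
    simp only [extendOfIndexTwoFun, dif_neg hx, dif_pos hy, dif_neg hxy]
    rw [ψ.map_mk_eq_mul (hmem hx) (hconj_mem y hy γ₀) (hmem hxy) (by group), hconj ⟨y, hy⟩]
    group
  · have hxy : x * y ∈ Δ := hmul.2 (iff_of_false hx hy)
    have hconj_y := hconj_mem _ (hmem hy) γ₀
    simp only [extendOfIndexTwoFun, dif_neg hx, dif_neg hy, dif_pos hxy]
    -- `x * y = (x * γ₀⁻¹) * (γ₀ * (y * γ₀⁻¹) * γ₀⁻¹) * γ₀ ^ 2`
    rw [ψ.map_mk_eq_mul (Δ.mul_mem (hmem hx) hconj_y) (Subgroup.sq_mem_of_index_two hΔ γ₀) hxy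
        (by group), ψ.map_mk_eq_mul (hmem hx) hconj_y _ rfl, hconj ⟨_, hmem hy⟩, hsq]
    group

variable
  (hconj : ∀ δ : Δ, ψ ⟨γ₀ * δ * γ₀⁻¹, (Subgroup.normal_of_index_eq_two hΔ).conj_mem _ δ.2 γ₀⟩ =
    s * ψ δ * s⁻¹)
  (hsq : ψ ⟨γ₀ ^ 2, Subgroup.sq_mem_of_index_two hΔ γ₀⟩ = s ^ 2)

noncomputable def extendOfIndexTwo : Γ →* M :=
  MonoidHom.mk' (extendOfIndexTwoFun hΔ hγ₀ ψ s) (extendOfIndexTwoFun_mul hΔ hγ₀ hconj hsq)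

theorem extendOfIndexTwo_apply_of_mem {δ : Γ} (hδ : δ ∈ Δ) :
    extendOfIndexTwo hΔ hγ₀ hconj hsq δ = ψ ⟨δ, hδ⟩ :=
  dif_pos hδ

theorem extendOfIndexTwo_apply_self : extendOfIndexTwo hΔ hγ₀ hconj hsq γ₀ = s := by
  have hone : (⟨γ₀ * γ₀⁻¹, Subgroup.mul_inv_mem_of_index_eq_two hΔ hγ₀ hγ₀⟩ : Δ) = 1 :=
    Subtype.ext (mul_inv_cancel γ₀)
  rw [extendOfIndexTwo, mk'_apply, extendOfIndexTwoFun, dif_neg hγ₀, hone, map_one, one_mul]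

end Extend

end MonoidHom

namespace SemidirectProduct

variable {N H : Type*} [Group N] [Group H] {φ : H →* MulAut N}

theorem inl_mul_inr_mul_inl_mul_inv (a n : N) (h : H) :
    inl a * inr h * inl n * (inl a * inr h : N ⋊[φ] H)⁻¹ = inl (a * φ h n * a⁻¹) := by
  simp only [map_mul, map_inv, inl_aut]
  group

theorem inl_mul_inr_sq (a : N) (h : H) :
    (inl a * inr h : N ⋊[φ] H) ^ 2 = inl (a * φ h a) * inr (h ^ 2) := by
  ext <;> simp [sq]

def restrictLeft {K : Type*} [Group K] (r : K →* N ⋊[φ] H) (L : Subgroup K)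
    (hr : ∀ k ∈ L, (r k).right = 1) : L →* N where
  toFun k := (r k).left
  map_one' := by simp
  map_mul' k k' := by simp [hr k k.2]

theorem inl_restrictLeft {K : Type*} [Group K] (r : K →* N ⋊[φ] H) (L : Subgroup K)
    (hr : ∀ k ∈ L, (r k).right = 1) (k : L) : inl (restrictLeft r L hr k) = r k := by
  rw [← inl_left_mul_inr_right (r k), hr k k.2, map_one, mul_one]
  rfl

section IndexTwo

variable {Γ G : Type*} [Group Γ] [Group G] {Δ : Subgroup Γ} {γ₀ : Γ}
  {φ : Multiplicative (ZMod 2) →* MulAut G}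

theorem eq_inl_mul_inr_of_index_eq_two (hΔ : Δ.index = 2) (hγ₀ : γ₀ ∉ Δ)
    {r : Γ →* G ⋊[φ] Multiplicative (ZMod 2)} (hr : ∀ γ, (r γ).right = 1 ↔ γ ∈ Δ) :
    r γ₀ = inl (r γ₀).left * inr (.ofAdd 1) := by
  rw [← ((rightHom.comp r).eq_one_iff_mem_iff_of_index_eq_two hΔ hγ₀).1 hr |>.2]
  exact (inl_left_mul_inr_right _).symm

variable (hΔ : Δ.index = 2)

theorem inl_comp_apply_conj {ρ : Δ →* G} {A : G}
    (hρ : ∀ δ : Δ, ρ ⟨γ₀ * δ * γ₀⁻¹, (Subgroup.normal_of_index_eq_two hΔ).conj_mem _ δ.2 γ₀⟩ =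
      A * φ (.ofAdd 1) (ρ δ) * A⁻¹) (δ : Δ) :
    (inl.comp ρ : Δ →* G ⋊[φ] Multiplicative (ZMod 2))
        ⟨γ₀ * δ * γ₀⁻¹, (Subgroup.normal_of_index_eq_two hΔ).conj_mem _ δ.2 γ₀⟩ =
      inl A * inr (.ofAdd 1) * inl.comp ρ δ * (inl A * inr (.ofAdd 1))⁻¹ := by
  rw [MonoidHom.comp_apply, MonoidHom.comp_apply, inl_mul_inr_mul_inl_mul_inv, hρ δ]

theorem inl_comp_apply_sq {ρ : Δ →* G} {A : G}
    (hρ : ρ ⟨γ₀ ^ 2, Subgroup.sq_mem_of_index_two hΔ γ₀⟩ = A * φ (.ofAdd 1) A) :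
    (inl.comp ρ : Δ →* G ⋊[φ] Multiplicative (ZMod 2))
        ⟨γ₀ ^ 2, Subgroup.sq_mem_of_index_two hΔ γ₀⟩ = (inl A * inr (.ofAdd 1)) ^ 2 := by
  rw [MonoidHom.comp_apply, inl_mul_inr_sq, hρ, ZMod.ofAdd_one_sq, map_one inr, mul_one]

theorem restrictLeft_apply_conj (hγ₀ : γ₀ ∉ Δ) {r : Γ →* G ⋊[φ] Multiplicative (ZMod 2)}
    (hr : ∀ γ, (r γ).right = 1 ↔ γ ∈ Δ) (δ : Δ) :
    restrictLeft r Δ (fun δ ↦ (hr δ).2)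
        ⟨γ₀ * δ * γ₀⁻¹, (Subgroup.normal_of_index_eq_two hΔ).conj_mem _ δ.2 γ₀⟩ =
      (r γ₀).left * φ (.ofAdd 1) (restrictLeft r Δ (fun δ ↦ (hr δ).2) δ) * (r γ₀).left⁻¹ := by
  refine inl_injective (φ := φ) ?_
  rw [inl_restrictLeft, ← inl_mul_inr_mul_inl_mul_inv, inl_restrictLeft,
    ← eq_inl_mul_inr_of_index_eq_two hΔ hγ₀ hr]
  simp only [map_mul, map_inv]

theorem restrictLeft_apply_sq (hγ₀ : γ₀ ∉ Δ) {r : Γ →* G ⋊[φ] Multiplicative (ZMod 2)}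
    (hr : ∀ γ, (r γ).right = 1 ↔ γ ∈ Δ) :
    restrictLeft r Δ (fun δ ↦ (hr δ).2) ⟨γ₀ ^ 2, Subgroup.sq_mem_of_index_two hΔ γ₀⟩ =
      (r γ₀).left * φ (.ofAdd 1) (r γ₀).left := by
  refine inl_injective (φ := φ) ?_
  rw [inl_restrictLeft, ← mul_one (inl _), ← map_one inr, ← ZMod.ofAdd_one_sq, ← inl_mul_inr_sq,
    ← eq_inl_mul_inr_of_index_eq_two hΔ hγ₀ hr]
  exact map_pow r γ₀ 2

variable (hγ₀ : γ₀ ∉ Δ)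

noncomputable def homEquivOfIndexTwo :
    {r : Γ →* G ⋊[φ] Multiplicative (ZMod 2) // ∀ γ, (r γ).right = 1 ↔ γ ∈ Δ} ≃
      {pA : (Δ →* G) × G //
        (∀ δ : Δ, pA.1 ⟨γ₀ * δ * γ₀⁻¹, (Subgroup.normal_of_index_eq_two hΔ).conj_mem _ δ.2 γ₀⟩ =
          pA.2 * φ (.ofAdd 1) (pA.1 δ) * pA.2⁻¹) ∧
        pA.1 ⟨γ₀ ^ 2, Subgroup.sq_mem_of_index_two hΔ γ₀⟩ = pA.2 * φ (.ofAdd 1) pA.2} where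
  toFun r := ⟨(restrictLeft r.1 Δ fun δ ↦ (r.2 δ).2, (r.1 γ₀).left),
    restrictLeft_apply_conj hΔ hγ₀ r.2, restrictLeft_apply_sq hΔ hγ₀ r.2⟩
  invFun pA := by
    refine ⟨MonoidHom.extendOfIndexTwo hΔ hγ₀ (inl_comp_apply_conj hΔ pA.2.1)
      (inl_comp_apply_sq hΔ pA.2.2), ?_⟩
    refine (MonoidHom.eq_one_iff_mem_iff_of_index_eq_two hΔ hγ₀ (rightHom.comp _)).2
      ⟨fun δ hδ ↦ ?_, ?_⟩
    · simp [MonoidHom.extendOfIndexTwo_apply_of_mem _ _ _ _ hδ]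
    · simp [MonoidHom.extendOfIndexTwo_apply_self]
  left_inv r := by
    refine Subtype.ext <| MonoidHom.ext_of_index_eq_two hΔ hγ₀ (fun δ hδ ↦ ?_) ?_
    · rw [MonoidHom.extendOfIndexTwo_apply_of_mem _ _ _ _ hδ]
      exact inl_restrictLeft _ _ (fun δ ↦ (r.2 δ).2) ⟨δ, hδ⟩
    · rw [MonoidHom.extendOfIndexTwo_apply_self]
      exact (eq_inl_mul_inr_of_index_eq_two hΔ hγ₀ r.2).symm
  right_inv pA := by
    refine Subtype.ext <| Prod.ext (MonoidHom.ext fun δ ↦ inl_injective (φ := φ) ?_) ?_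
    · rw [inl_restrictLeft, MonoidHom.extendOfIndexTwo_apply_of_mem _ _ _ _ δ.2]
      rfl
    · simp [MonoidHom.extendOfIndexTwo_apply_self]

end IndexTwo

end SemidirectProduct

theorem stmt13_general (Γ : Type*) [Group Γ] (Δ : Subgroup Γ) (hΔn : Δ.Normal)
    (hΔ : Δ.index = 2) (γ₀ : Γ) (hγ₀ : γ₀ ∉ Δ) (hγ₀sq : γ₀ ^ 2 ∈ Δ)
    (G : Type*) [Group G] (θ : G ≃* G)
    (φ : Multiplicative (ZMod 2) →* MulAut G)
    (hφ : φ (Multiplicative.ofAdd (1 : ZMod 2)) = θ) :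
    ∃ e : {r : Γ →* G ⋊[φ] Multiplicative (ZMod 2) //
            ∀ γ : Γ, (r γ).right = 1 ↔ γ ∈ Δ} ≃
          {pA : (Δ →* G) × G //
            (∀ δ : Δ, pA.1 ⟨γ₀ * (δ : Γ) * γ₀⁻¹, hΔn.conj_mem (δ : Γ) δ.2 γ₀⟩ =
              pA.2 * θ (pA.1 δ) * pA.2⁻¹) ∧
            pA.1 ⟨γ₀ ^ 2, hγ₀sq⟩ = pA.2 * θ pA.2},
      ∀ r, (∀ δ : Δ, (e r).1.1 δ = (r.1 (δ : Γ)).left) ∧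
        (e r).1.2 = (r.1 γ₀).left := by
  subst hφ
  exact ⟨SemidirectProduct.homEquivOfIndexTwo hΔ hγ₀, fun r ↦ ⟨fun δ ↦ rfl, rfl⟩⟩

/-- Let `Δ ≤ Γ` be a subgroup of index 2 (hence normal), fix
`γ₀ ∈ Γ ∖ Δ` (so `γ₀² ∈ Δ`), and let `G` be a group with an involutive
automorphism `θ`, giving a semidirect product `G ⋊ ℤ/2` where the nontrivial
element acts by `θ`.  Then `r ↦ (ρ, A)`, with `ρ(δ) = (r δ).left` and
`A = (r γ₀).left`, is a bijection between homomorphisms `r : Γ → G ⋊ ℤ/2`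
compatible with the projection to `ℤ/2` and pairs `(ρ, A)` of a homomorphism
`ρ : Δ → G` and `A ∈ G` with `ρ(γ₀ δ γ₀⁻¹) = A·θ(ρ(δ))·A⁻¹` for all `δ ∈ Δ`
and `ρ(γ₀²) = A·θ(A)`. -/
theorem stmt13 (Γ : Type*) [Group Γ] (Δ : Subgroup Γ) (hΔn : Δ.Normal)
    (hΔ : Δ.index = 2) (γ₀ : Γ) (hγ₀ : γ₀ ∉ Δ) (hγ₀sq : γ₀ ^ 2 ∈ Δ)
    (G : Type*) [Group G] (θ : G ≃* G) (hθ : ∀ g : G, θ (θ g) = g)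
    (φ : Multiplicative (ZMod 2) →* MulAut G)
    (hφ : φ (Multiplicative.ofAdd (1 : ZMod 2)) = θ) :
    ∃ e : {r : Γ →* G ⋊[φ] Multiplicative (ZMod 2) //
            ∀ γ : Γ, (r γ).right = 1 ↔ γ ∈ Δ} ≃
          {pA : (Δ →* G) × G //
            (∀ δ : Δ, pA.1 ⟨γ₀ * (δ : Γ) * γ₀⁻¹, hΔn.conj_mem (δ : Γ) δ.2 γ₀⟩ =
              pA.2 * θ (pA.1 δ) * pA.2⁻¹) ∧
            pA.1 ⟨γ₀ ^ 2, hγ₀sq⟩ = pA.2 * θ pA.2},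
      ∀ r, (∀ δ : Δ, (e r).1.1 δ = (r.1 (δ : Γ)).left) ∧
        (e r).1.2 = (r.1 γ₀).left :=
  stmt13_general Γ Δ hΔn hΔ γ₀ hγ₀ hγ₀sq G θ φ hφ
end
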